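/- For holomorphic functions f, g on the upper half-plane, real weights k, l, a nonnegative integer ν, and any γ in SL₂(ℤ), the ν-th Rankin–Cohen bracket satisfies the cocycle property [f|_k γ, g|_l γ]_ν = [f, g]_ν |_{k+l+2ν} γ. -/

import Mathlib

open Complex MeasureTheory Finset

local notation "SL2Z" => Matrix.SpecialLinearGroup (Fin 2) ℤ

/-- The upper half-plane, as a subset of `ℂ`. -/
def UpperHalf : Set ℂ := {z | 0 < z.im}

/-- The Möbius action of `γ ∈ SL₂(ℤ)` on a point of the upper half-plane. -/
noncomputable def moebius (γ : SL2Z) (z : ℂ) : ℂ :=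
  ((γ 0 0 : ℂ) * z + (γ 0 1 : ℂ)) / ((γ 1 0 : ℂ) * z + (γ 1 1 : ℂ))

/-- The automorphy factor `cz + d`. -/
def denom (γ : SL2Z) (z : ℂ) : ℂ := (γ 1 0 : ℂ) * z + (γ 1 1 : ℂ)

/-- The weight-`k` slash action (real weight, via complex powers):
`(f ∣ₖ γ)(z) = (cz+d)^{-k} f(γz)`. -/
noncomputable def slash (k : ℝ) (γ : SL2Z) (f : ℂ → ℂ) : ℂ → ℂ :=
  fun z => denom γ z ^ (-(k : ℂ)) * f (moebius γ z)

/-- The normalized derivative `D = (1/(2πi)) d/dz`. -/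
noncomputable def Dop (f : ℂ → ℂ) : ℂ → ℂ :=
  fun z => (1 / (2 * (Real.pi : ℂ) * Complex.I)) * deriv f z

/-- Iterated normalized derivative `D^r`. -/
noncomputable def DIter (r : ℕ) (f : ℂ → ℂ) : ℂ → ℂ := Dop^[r] f

/-- The ν-th Rankin–Cohen bracket of `f` and `g`, of weights `k` and `l`:
`[f,g]_ν = Σ_{r=0}^{ν} (-1)^{ν-r} C(ν,r) Γ(k+ν)Γ(l+ν)/(Γ(k+r)Γ(l+ν-r)) D^r f · D^{ν-r} g`. -/
noncomputable def RC (k l : ℝ) (ν : ℕ) (f g : ℂ → ℂ) : ℂ → ℂ := fun z =>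
  ∑ r ∈ Finset.range (ν + 1),
    ((-1 : ℂ) ^ (ν - r) * (Nat.choose ν r : ℂ) *
        ((Real.Gamma (k + ν) * Real.Gamma (l + ν) /
          (Real.Gamma (k + r) * Real.Gamma (l + (ν - r : ℕ))) : ℝ) : ℂ)) *
      DIter r f z * DIter (ν - r) g z

/-- The coefficient `α(k,l,ν,n,m)` appearing in the Dirichlet series `L_{f,g,ν,n}`. -/
noncomputable def alphaRC (k l : ℝ) (ν : ℕ) (n m : ℕ) : ℝ :=
  ∑ r ∈ Finset.range (ν + 1),
    (-1 : ℝ) ^ (ν - r) * (Nat.choose ν r : ℝ) *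
      (Real.Gamma (k + ν) * Real.Gamma (l + ν) /
        (Real.Gamma (k + r) * Real.Gamma (l + (ν - r : ℕ)))) *
      (n : ℝ) ^ r * (m : ℝ) ^ (ν - r)

/-- A holomorphic modular form of integral weight `k`, character `χ` (a function of the
lower-right entry `d`), on the subgroup `Γ ≤ SL₂(ℤ)`; functions on `ℂ`, conditions on `ℍ`. -/
structure IsModularFormC (Γ : Subgroup SL2Z) (k : ℤ) (χ : ℤ → ℂ) (f : ℂ → ℂ) : Prop where
  holo : DifferentiableOn ℂ f UpperHalf
  transform : ∀ γ ∈ Γ, ∀ z ∈ UpperHalf,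
    f (moebius γ z) = χ (γ 1 1) * denom γ z ^ k * f z
  bounded : ∀ γ : SL2Z, ∃ M A : ℝ, ∀ z ∈ UpperHalf, A ≤ z.im →
    ‖f (moebius γ z)‖ ≤ M * ‖denom γ z‖ ^ (k : ℝ)

/-- A cusp form of integral weight `k`, character `χ`, on `Γ ≤ SL₂(ℤ)`. -/
structure IsCuspFormC (Γ : Subgroup SL2Z) (k : ℤ) (χ : ℤ → ℂ) (f : ℂ → ℂ) : Prop where
  holo : DifferentiableOn ℂ f UpperHalf
  transform : ∀ γ ∈ Γ, ∀ z ∈ UpperHalf,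
    f (moebius γ z) = χ (γ 1 1) * denom γ z ^ k * f z
  vanish : ∀ γ : SL2Z, ∀ ε > (0 : ℝ), ∃ A : ℝ, ∀ z ∈ UpperHalf, A ≤ z.im →
    ‖f (moebius γ z)‖ ≤ ε * ‖denom γ z‖ ^ (k : ℝ)

/-- The Jacobi theta function `θ(z) = Σ_{n ∈ ℤ} e^{2πin²z}`. -/
noncomputable def jacobiThetaFn (z : ℂ) : ℂ :=
  ∑' n : ℤ, Complex.exp (2 * Real.pi * Complex.I * (n : ℂ) ^ 2 * z)

/-- The theta automorphy factor `j(γ,z) = θ(γz)/θ(z)`; for `γ ∈ Γ₀(4)` it equals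
`(c/d)ε_d^{-1}(cz+d)^{1/2}`, so that `j(γ,z)^{2k+1}` is the weight `k+1/2` automorphy factor
with the theta multiplier. -/
noncomputable def jTheta (γ : SL2Z) (z : ℂ) : ℂ :=
  jacobiThetaFn (moebius γ z) / jacobiThetaFn z

/-- A holomorphic modular form of half-integral weight `k + 1/2` with character `χ`
on `Γ₀(4)` (in Shimura's sense, with the theta multiplier). -/
structure IsModularFormHalf (k : ℕ) (χ : ℤ → ℂ) (f : ℂ → ℂ) : Prop where
  holo : DifferentiableOn ℂ f UpperHalf
  transform : ∀ γ ∈ CongruenceSubgroup.Gamma0 4, ∀ z ∈ UpperHalf,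
    f (moebius γ z) = χ (γ 1 1) * jTheta γ z ^ (2 * k + 1) * f z
  bounded : ∀ γ : SL2Z, ∃ M A : ℝ, ∀ z ∈ UpperHalf, A ≤ z.im →
    ‖f (moebius γ z)‖ ≤ M * ‖denom γ z‖ ^ ((k : ℝ) + 1 / 2)

/-- A cusp form of half-integral weight `k + 1/2` with character `χ` on `Γ₀(4)`. -/
structure IsCuspFormHalf (k : ℕ) (χ : ℤ → ℂ) (f : ℂ → ℂ) : Prop where
  holo : DifferentiableOn ℂ f UpperHalf
  transform : ∀ γ ∈ CongruenceSubgroup.Gamma0 4, ∀ z ∈ UpperHalf,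
    f (moebius γ z) = χ (γ 1 1) * jTheta γ z ^ (2 * k + 1) * f z
  vanish : ∀ γ : SL2Z, ∀ ε > (0 : ℝ), ∃ A : ℝ, ∀ z ∈ UpperHalf, A ≤ z.im →
    ‖f (moebius γ z)‖ ≤ ε * ‖denom γ z‖ ^ ((k : ℝ) + 1 / 2)

/-- A measurable fundamental domain `𝒟 ⊆ ℍ` for the action of `Γ` on the upper half-plane. -/
structure IsFundDomain (Γ : Subgroup SL2Z) (𝒟 : Set ℂ) : Prop where
  subset : 𝒟 ⊆ UpperHalf
  meas : MeasurableSet 𝒟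
  covers : ∀ z ∈ UpperHalf, ∃ γ ∈ Γ, moebius γ z ∈ 𝒟
  ae_disjoint : ∀ γ ∈ Γ, (γ : Matrix (Fin 2) (Fin 2) ℤ) ≠ 1 →
    (γ : Matrix (Fin 2) (Fin 2) ℤ) ≠ -1 →
    volume {z | z ∈ 𝒟 ∧ moebius γ z ∈ 𝒟} = 0

/-- The Petersson inner product `⟨f,g⟩ = ∫_𝒟 f(z) conj(g(z)) y^k dxdy/y²` of weight `k`,
computed on a fundamental domain `𝒟`. -/
noncomputable def petersson (k : ℝ) (𝒟 : Set ℂ) (f g : ℂ → ℂ) : ℂ :=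
  ∫ z in 𝒟, f z * (starRingEnd ℂ) (g z) * (((z.im ^ k / z.im ^ 2 : ℝ)) : ℂ)

/-- `R` is a complete set of representatives for the cosets `Γ_∞\Γ`, where
`Γ_∞ = {± [[1,t],[0,1]] : t ∈ ℤ}` is the subgroup of elements with lower-left entry `0`. -/
def IsCosetReps (Γ : Subgroup SL2Z) (R : Set SL2Z) : Prop :=
  (∀ δ ∈ R, δ ∈ Γ) ∧ ∀ γ ∈ Γ, ∃! δ, δ ∈ R ∧ ∃ τ : SL2Z, τ 1 0 = 0 ∧ γ = τ * δ

/-!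
Write `j = cz + d`, `u = j⁻¹` and `X = -c/(2πi)`, so that `D u = X u²` and
`D (j^{-k}) = k X u j^{-k}`. Induction on `n` gives
`D^n (f ∣ₖ γ) = j^{-k} Σ_s C(n,s) (k+s)(k+s+1)⋯(k+n-1) X^{n-s} u^{n+s} (D^s f) ∘ γ`.
Away from the poles of `Γ` the Gamma ratios of the bracket are such rising products, and after
substituting the expansion, the coefficient of `u^{2ν} (D^s f ∘ γ)(D^t g ∘ γ)` carries the factor
`Σ_r (-1)^{ν-r} C(ν,r) C(r,s) C(ν-r,t) = [s + t = ν] (-1)^t C(ν,s)`: every term with a power of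
`X` cancels. If `Γ(k+ν)` or `Γ(l+ν)` is a pole, its junk value `0` makes both sides vanish.
-/

namespace RankinCohen

open scoped Real

lemma isOpen_upperHalf : IsOpen UpperHalf :=
  isOpen_lt continuous_const Complex.continuous_im

lemma det_coe_complex (γ : SL2Z) : (γ 0 0 : ℂ) * γ 1 1 - γ 0 1 * γ 1 0 = 1 := by
  have h := γ.prop
  rw [Matrix.det_fin_two] at h
  exact_mod_cast h

lemma denom_ne_zero (γ : SL2Z) {z : ℂ} (hz : z ∈ UpperHalf) : denom γ z ≠ 0 := by
  intro h0
  have him : (γ 1 0 : ℝ) * z.im = 0 := by simpa [denom] using congrArg Complex.im h0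
  have hc : (γ 1 0 : ℂ) = 0 := by
    exact_mod_cast (mul_eq_zero.1 him).resolve_right (ne_of_gt hz)
  have := det_coe_complex γ
  simp_all [denom]

lemma moebius_im (γ : SL2Z) (z : ℂ) :
    (moebius γ z).im = z.im / Complex.normSq (denom γ z) := by
  rw [moebius, Complex.div_im, div_sub_div_same]
  congr 1
  simp only [Complex.add_im, Complex.add_re, Complex.mul_im, Complex.mul_re,
    Complex.intCast_re, Complex.intCast_im]
  have h := congrArg Complex.re (det_coe_complex γ)
  simp only [Complex.sub_re, Complex.mul_re, Complex.intCast_re, Complex.intCast_im,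
    Complex.one_re] at h
  linear_combination z.im * h

lemma moebius_mem_upperHalf (γ : SL2Z) {z : ℂ} (hz : z ∈ UpperHalf) :
    moebius γ z ∈ UpperHalf := by
  show 0 < (moebius γ z).im
  rw [moebius_im]
  exact div_pos hz (Complex.normSq_pos.2 (denom_ne_zero γ hz))

lemma hasDerivAt_denom (γ : SL2Z) (z : ℂ) : HasDerivAt (denom γ) (γ 1 0 : ℂ) z := by
  unfold denom
  simpa using ((hasDerivAt_id z).const_mul (γ 1 0 : ℂ)).add_const (γ 1 1 : ℂ)

lemma hasDerivAt_moebius (γ : SL2Z) {z : ℂ} (hz : z ∈ UpperHalf) :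
    HasDerivAt (moebius γ) ((denom γ z)⁻¹ ^ 2) z := by
  have hnum : HasDerivAt (fun z : ℂ => (γ 0 0 : ℂ) * z + γ 0 1) (γ 0 0 : ℂ) z := by
    simpa using ((hasDerivAt_id z).const_mul (γ 0 0 : ℂ)).add_const (γ 0 1 : ℂ)
  refine (hnum.div (hasDerivAt_denom γ z) (denom_ne_zero γ hz)).congr_deriv ?_
  rw [inv_pow, ← one_div]
  congr 1
  rw [denom]
  linear_combination det_coe_complex γ

lemma hasDerivAt_denom_cpow (γ : SL2Z) (w : ℂ) {z : ℂ} (hz : z ∈ UpperHalf) :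
    HasDerivAt (fun z => denom γ z ^ w) (w * denom γ z ^ (w - 1) * γ 1 0) z := by
  by_cases hc : (γ 1 0 : ℂ) = 0
  · have hconst : (fun z => denom γ z ^ w) = fun _ => (γ 1 1 : ℂ) ^ w := by
      funext x; simp [denom, hc]
    simpa [hconst, hc] using hasDerivAt_const z ((γ 1 1 : ℂ) ^ w)
  · refine (hasDerivAt_denom γ z).cpow_const (Or.inr ?_)
    have hc' : (γ 1 0 : ℝ) ≠ 0 := by exact_mod_cast hc
    have hz' : 0 < z.im := hz
    simp [denom, hc', hz'.ne']

lemma hasDerivAt_inv_denom_pow (γ : SL2Z) (m : ℕ) {z : ℂ} (hz : z ∈ UpperHalf) :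
    HasDerivAt (fun z => (denom γ z)⁻¹ ^ m) (-m * γ 1 0 * (denom γ z)⁻¹ ^ (m + 1)) z := by
  refine (((hasDerivAt_denom γ z).inv (denom_ne_zero γ hz)).pow m).congr_deriv ?_
  rcases m with _ | m
  · simp
  · simp only [Nat.cast_add, Nat.cast_one, add_tsub_cancel_right, Pi.inv_apply]
    field_simp
    ring

lemma DIter_succ (n : ℕ) (f : ℂ → ℂ) : DIter (n + 1) f = Dop (DIter n f) :=
  Function.iterate_succ_apply' Dop n f

lemma analyticOnNhd_DIter {f : ℂ → ℂ} (hf : DifferentiableOn ℂ f UpperHalf) (n : ℕ) :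
    AnalyticOnNhd ℂ (DIter n f) UpperHalf := by
  induction n with
  | zero => exact hf.analyticOnNhd isOpen_upperHalf
  | succ n ih => rw [DIter_succ]; exact analyticOnNhd_const.mul ih.deriv

section ascProd

variable {R : Type*} [CommSemiring R] (K : R)

/-- `Γ(K + n) / Γ(K + s)`, away from the poles of `Γ`. -/
def ascProd (s n : ℕ) : R := ∏ j ∈ Ico s n, (K + j)

@[simp] lemma ascProd_self (s : ℕ) : ascProd K s s = 1 := by simp [ascProd]

lemma ascProd_eq_mul_ascProd_succ {s n : ℕ} (h : s < n) :
    ascProd K s n = (K + s) * ascProd K (s + 1) n :=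
  prod_eq_prod_Ico_succ_bot h _

lemma ascProd_succ {s n : ℕ} (h : s ≤ n) : ascProd K s (n + 1) = ascProd K s n * (K + n) :=
  prod_Ico_succ_top h _

lemma ascProd_mul_ascProd {s r n : ℕ} (h₁ : s ≤ r) (h₂ : r ≤ n) :
    ascProd K s r * ascProd K r n = ascProd K s n :=
  prod_Ico_consecutive _ h₁ h₂

end ascProd

lemma Gamma_add_nat_eq_prod_mul (k : ℝ) {r n : ℕ} (hr : r ≤ n) (h : Real.Gamma (k + r) ≠ 0) :
    Real.Gamma (k + n) = (∏ j ∈ Ico r n, (k + j)) * Real.Gamma (k + r) := by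
  induction n, hr using Nat.le_induction with
  | base => simp
  | succ m hrm ih =>
    have hkm : k + m ≠ 0 := by
      intro h0
      apply h
      rw [Real.Gamma_eq_zero_iff]
      exact ⟨m - r, by push_cast [Nat.cast_sub hrm]; linarith⟩
    rw [prod_Ico_succ_top hrm, Nat.cast_succ, ← add_assoc, Real.Gamma_add_one hkm, ih]
    ring

/-- Where `Γ(k + r)` is a pole, the junk value `Γ(k + n) / 0 = 0` still agrees with the
product, because one of its factors `k + j` vanishes. -/
lemma Gamma_div_Gamma_eq_prod (k : ℝ) {r n : ℕ} (hr : r ≤ n) (h : Real.Gamma (k + n) ≠ 0) :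
    Real.Gamma (k + n) / Real.Gamma (k + r) = ∏ j ∈ Ico r n, (k + j) := by
  by_cases hden : Real.Gamma (k + r) = 0
  · obtain ⟨m, hm⟩ := (Real.Gamma_eq_zero_iff _).1 hden
    have hlt : r + m < n := by
      by_contra! hge
      apply h
      rw [Real.Gamma_eq_zero_iff]
      exact ⟨r + m - n, by push_cast [Nat.cast_sub hge]; linarith⟩
    rw [hden, div_zero, eq_comm]
    exact prod_eq_zero (mem_Ico.2 ⟨Nat.le_add_right r m, hlt⟩) (by push_cast; linarith)
  · rw [Gamma_add_nat_eq_prod_mul k hr hden, mul_div_assoc, div_self hden, mul_one]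

lemma Gamma_coeff_eq_ascProd (k l : ℝ) {r ν : ℕ} (hr : r ≤ ν)
    (hk : Real.Gamma (k + ν) ≠ 0) (hl : Real.Gamma (l + ν) ≠ 0) :
    ((Real.Gamma (k + ν) * Real.Gamma (l + ν) /
        (Real.Gamma (k + r) * Real.Gamma (l + (ν - r : ℕ))) : ℝ) : ℂ)
      = ascProd (k : ℂ) r ν * ascProd (l : ℂ) (ν - r) ν := by
  rw [← div_mul_div_comm, Gamma_div_Gamma_eq_prod k hr hk,
    Gamma_div_Gamma_eq_prod l (Nat.sub_le ν r) hl, ascProd, ascProd]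
  push_cast
  rfl

lemma choose_mul_choose_sub_comm (N i t : ℕ) :
    N.choose i * (N - i).choose t = N.choose t * (N - t).choose i := by
  rcases le_or_gt (i + t) N with h | h
  · rw [← Nat.choose_symm (by omega : i ≤ N), Nat.choose_mul (by omega : t ≤ N - i),
      show N - i - t = N - t - i by omega, Nat.choose_symm (by omega : i ≤ N - t)]
  · have hl : N.choose i * (N - i).choose t = 0 := by
      simp only [mul_eq_zero, Nat.choose_eq_zero_iff]; omega
    have hr : N.choose t * (N - t).choose i = 0 := by
      simp only [mul_eq_zero, Nat.choose_eq_zero_iff]; omega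
    rw [hl, hr]

section CommRing

variable {R : Type*} [CommRing R]

lemma sum_range_neg_one_pow_mul_choose (M : ℕ) :
    ∑ i ∈ range (M + 1), (-1 : R) ^ (M - i) * M.choose i = 0 ^ M := by
  simpa using (add_pow (1 : R) (-1) M).symm

lemma sum_range_add_neg_one_pow_mul_choose (t M : ℕ) :
    ∑ i ∈ range (t + M + 1), (-1 : R) ^ (t + M - i) * M.choose i = (-1) ^ t * 0 ^ M := by
  rw [show t + M + 1 = M + 1 + t by omega, sum_range_add, ← sum_range_neg_one_pow_mul_choose,
    mul_sum]
  have htail : ∀ j ∈ range t, (-1 : R) ^ (t + M - (M + 1 + j)) * M.choose (M + 1 + j) = 0 := by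
    intro j _
    rw [Nat.choose_eq_zero_of_lt (by omega), Nat.cast_zero, mul_zero]
  rw [sum_eq_zero htail, add_zero]
  refine sum_congr rfl fun i hi => ?_
  rw [show t + M - i = t + (M - i) by have := mem_range.1 hi; omega, pow_add, mul_assoc]

lemma sum_neg_one_pow_mul_choose_mul_choose_mul_choose (ν s t : ℕ) :
    ∑ r ∈ range (ν + 1), (-1 : R) ^ (ν - r) * ν.choose r * r.choose s * (ν - r).choose t
      = if s + t = ν then (-1 : R) ^ t * ν.choose s else 0 := by
  rcases lt_or_ge ν s with hνs | hsν
  · rw [if_neg (by omega)]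
    refine sum_eq_zero fun r hr => ?_
    rw [Nat.choose_eq_zero_of_lt (by have := mem_range.1 hr; omega : r < s)]
    simp
  obtain ⟨N, rfl⟩ := Nat.exists_eq_add_of_le hsν
  have hterm : ∀ i, (-1 : R) ^ (s + N - (s + i)) * (s + N).choose (s + i) * (s + i).choose s
      * (s + N - (s + i)).choose t
      = (s + N).choose s * N.choose t * ((-1 : R) ^ (N - i) * (N - t).choose i) := by
    intro i
    have h₁ : (s + N).choose (s + i) * (s + i).choose s = (s + N).choose s * N.choose i := by
      simpa using Nat.choose_mul (n := s + N) (Nat.le_add_right s i)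
    have h₂ := choose_mul_choose_sub_comm N i t
    rw [show s + N - (s + i) = N - i by omega, mul_assoc _ _ ((s + i).choose s : R),
      ← Nat.cast_mul, h₁]
    have h₂' := congrArg (Nat.cast : ℕ → R) h₂
    push_cast at h₂'
    push_cast
    linear_combination (-1 : R) ^ (N - i) * (s + N).choose s * h₂'
  have hhead : ∀ r ∈ range s,
      (-1 : R) ^ (s + N - r) * (s + N).choose r * r.choose s * (s + N - r).choose t = 0 := by
    intro r hr
    rw [Nat.choose_eq_zero_of_lt (mem_range.1 hr)]
    simp
  rw [show s + N + 1 = s + (N + 1) by omega, sum_range_add, sum_eq_zero hhead, zero_add]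
  simp only [hterm, ← mul_sum]
  rcases lt_or_ge N t with hNt | htN
  · rw [Nat.choose_eq_zero_of_lt hNt, if_neg (by omega)]
    simp
  obtain ⟨M, rfl⟩ := Nat.exists_eq_add_of_le htN
  rw [Nat.add_sub_cancel_left, sum_range_add_neg_one_pow_mul_choose]
  rcases M with _ | M
  · simp [mul_comm]
  · rw [if_neg (by omega)]
    simp

lemma choose_mul_ascProd_succ (K : R) (n i : ℕ) :
    n.choose (i + 1) * ascProd K (i + 1) n * (K + n + (i + 1)) + n.choose i * ascProd K i n
      = (n + 1).choose (i + 1) * ascProd K (i + 1) (n + 1) := by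
  rcases lt_trichotomy i n with hlt | rfl | hgt
  · have hpascal : ((n + 1).choose (i + 1) : R) = n.choose i + n.choose (i + 1) := by
      rw [Nat.choose_succ_succ, Nat.cast_add]
    have hsucc : (n.choose (i + 1) * (i + 1) : R) = n.choose i * (n - i) := by
      have h := congrArg (Nat.cast : ℕ → R) (Nat.choose_succ_right_eq n i)
      push_cast [Nat.cast_sub hlt.le] at h
      exact h
    rw [ascProd_eq_mul_ascProd_succ K hlt, ascProd_succ K hlt, hpascal]
    linear_combination ascProd K (i + 1) n * hsucc
  · simp
  · simp [Nat.choose_eq_zero_of_lt hgt, Nat.choose_eq_zero_of_lt (by omega : n < i + 1),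
      Nat.choose_eq_zero_of_lt (by omega : n + 1 < i + 1)]

/-- The coefficient of `u^(n+s) (D^s f)(γz)` in `(cz+d)^k D^n (f ∣ₖ γ)(z)`, where `X = -c/(2πi)`
and `u = (cz+d)⁻¹`. -/
def slashCoeff (K X : R) (n s : ℕ) : R := n.choose s * ascProd K s n * X ^ (n - s)

def slashExpansion (K X u : R) (F : ℕ → R) (n : ℕ) : R :=
  ∑ s ∈ range (n + 1), slashCoeff K X n s * u ^ (n + s) * F s

lemma slashCoeff_of_lt (K X : R) {n s : ℕ} (h : n < s) : slashCoeff K X n s = 0 := by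
  simp [slashCoeff, Nat.choose_eq_zero_of_lt h]

lemma slashCoeff_succ_zero (K X : R) (n : ℕ) :
    slashCoeff K X (n + 1) 0 = slashCoeff K X n 0 * (K + n) * X := by
  rw [slashCoeff, slashCoeff, Nat.choose_zero_right, Nat.choose_zero_right,
    ascProd_succ K (Nat.zero_le n), Nat.sub_zero, Nat.sub_zero, pow_succ]
  ring

lemma slashCoeff_succ_succ (K X : R) (n i : ℕ) :
    slashCoeff K X (n + 1) (i + 1)
      = slashCoeff K X n (i + 1) * (K + (n + (i + 1) : ℕ)) * X + slashCoeff K X n i := by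
  rcases lt_or_ge i n with hlt | hge
  · have hX : X ^ (n - (i + 1)) * X = X ^ (n - i) := by
      rw [← pow_succ]; congr 1; omega
    simp only [slashCoeff, Nat.add_sub_add_right, ← choose_mul_ascProd_succ K n i, ← hX]
    push_cast
    ring
  · rw [slashCoeff_of_lt K X (by omega : n < i + 1), zero_mul, zero_mul, zero_add]
    rcases hge.eq_or_lt with rfl | hgt
    · simp [slashCoeff]
    · rw [slashCoeff_of_lt K X hgt, slashCoeff_of_lt K X (by omega)]

lemma slashExpansion_eq_sum_range_of_le (K X u : R) (F : ℕ → R) {n N : ℕ} (h : n ≤ N) :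
    slashExpansion K X u F n = ∑ s ∈ range (N + 1), slashCoeff K X n s * u ^ (n + s) * F s := by
  refine sum_subset (range_subset_range.2 (by omega)) fun s _ hs => ?_
  rw [slashCoeff_of_lt K X (by simpa using hs), zero_mul, zero_mul]

/-- `D` applied to the term `u^m F s` of weight `K` gives `(K + m) X u^(m+1) F s + u^(m+2) F (s+1)`;
summed over the expansion of `D^n`, this is the expansion of `D^(n+1)`. -/
lemma slashExpansion_succ (K X u : R) (F : ℕ → R) (n : ℕ) :
    ∑ s ∈ range (n + 1), slashCoeff K X n s *
        ((K + (n + s : ℕ)) * X * u ^ (n + s + 1) * F s + u ^ (n + s + 2) * F (s + 1))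
      = slashExpansion K X u F (n + 1) := by
  have hshift : ∑ s ∈ range (n + 1),
        slashCoeff K X n s * ((K + (n + s : ℕ)) * X * u ^ (n + s + 1) * F s)
      = ∑ i ∈ range (n + 1),
          slashCoeff K X n (i + 1) * (K + (n + (i + 1) : ℕ)) * X * u ^ (n + 1 + (i + 1)) * F (i + 1)
        + slashCoeff K X n 0 * (K + n) * X * u ^ (n + 1) * F 0 := by
    rw [sum_range_succ', sum_range_succ _ n, slashCoeff_of_lt K X (Nat.lt_succ_self n)]
    simp only [zero_mul, add_zero]
    congr 1
    · refine sum_congr rfl fun i _ => ?_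
      ring
    · ring
  rw [sum_congr rfl fun s _ => mul_add _ _ _, sum_add_distrib, hshift, add_right_comm,
    slashExpansion, sum_range_succ' (fun s => slashCoeff K X (n + 1) s * u ^ (n + 1 + s) * F s),
    slashCoeff_succ_zero]
  simp only [slashCoeff_succ_succ, add_mul _ (slashCoeff K X n _), Nat.add_zero]
  rw [← sum_add_distrib]
  congr 1
  exact sum_congr rfl fun i _ => by ring

/-- `RC` with its Gamma ratios written as rising products, evaluated on sequences `F r`, `G r`
that stand for `D^r f (z)`, `D^r g (z)`. -/
def bracketSum (K L : R) (ν : ℕ) (F G : ℕ → R) : R :=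
  ∑ r ∈ range (ν + 1),
    (-1) ^ (ν - r) * ν.choose r * (ascProd K r ν * ascProd L (ν - r) ν) * F r * G (ν - r)

lemma bracketSum_const_mul (K L a b : R) (ν : ℕ) (F G : ℕ → R) :
    bracketSum K L ν (fun r => a * F r) (fun r => b * G r) = a * b * bracketSum K L ν F G := by
  rw [bracketSum, bracketSum, mul_sum]
  exact sum_congr rfl fun r _ => by ring

lemma bracketCoeff_mul_slashCoeff_mul_slashCoeff (K L X u : R) {ν r : ℕ} (hr : r ≤ ν) (s t : ℕ) :
    (-1) ^ (ν - r) * ν.choose r * (ascProd K r ν * ascProd L (ν - r) ν)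
        * (slashCoeff K X r s * u ^ (r + s)) * (slashCoeff L X (ν - r) t * u ^ (ν - r + t))
      = (-1) ^ (ν - r) * ν.choose r * r.choose s * (ν - r).choose t
        * (ascProd K s ν * ascProd L t ν * X ^ (ν - s - t) * u ^ (ν + s + t)) := by
  rcases lt_or_ge r s with hrs | hsr
  · simp [slashCoeff_of_lt K X hrs, Nat.choose_eq_zero_of_lt hrs]
  rcases lt_or_ge (ν - r) t with hrt | htr
  · simp [slashCoeff_of_lt L X hrt, Nat.choose_eq_zero_of_lt hrt]
  rw [slashCoeff, slashCoeff, ← ascProd_mul_ascProd K hsr hr,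
    ← ascProd_mul_ascProd L htr (Nat.sub_le ν r), show ν - s - t = r - s + (ν - r - t) by omega,
    show ν + s + t = r + s + (ν - r + t) by omega, pow_add, pow_add]
  ring

lemma sum_bracketCoeff_mul_slashCoeff_mul_slashCoeff (K L X u : R) (ν s t : ℕ) :
    ∑ r ∈ range (ν + 1), (-1) ^ (ν - r) * ν.choose r * (ascProd K r ν * ascProd L (ν - r) ν)
        * (slashCoeff K X r s * u ^ (r + s)) * (slashCoeff L X (ν - r) t * u ^ (ν - r + t))
      = if s + t = ν then (-1) ^ t * ν.choose s * (ascProd K s ν * ascProd L t ν) * u ^ (2 * ν)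
        else 0 := by
  rw [sum_congr rfl fun r hr => bracketCoeff_mul_slashCoeff_mul_slashCoeff K L X u
      (Nat.lt_succ_iff.1 (mem_range.1 hr)) s t, ← sum_mul,
    sum_neg_one_pow_mul_choose_mul_choose_mul_choose]
  split_ifs with h
  · rw [show ν - s - t = 0 by omega, show ν + s + t = 2 * ν by omega]
    ring
  · rw [zero_mul]

theorem bracketSum_slashExpansion (K L X u : R) (ν : ℕ) (F G : ℕ → R) :
    bracketSum K L ν (slashExpansion K X u F) (slashExpansion L X u G)
      = u ^ (2 * ν) * bracketSum K L ν F G := by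
  calc bracketSum K L ν (slashExpansion K X u F) (slashExpansion L X u G)
      = ∑ r ∈ range (ν + 1), ∑ s ∈ range (ν + 1), ∑ t ∈ range (ν + 1),
          (-1) ^ (ν - r) * ν.choose r * (ascProd K r ν * ascProd L (ν - r) ν)
            * (slashCoeff K X r s * u ^ (r + s)) * (slashCoeff L X (ν - r) t * u ^ (ν - r + t))
            * (F s * G t) := by
        rw [bracketSum]
        refine sum_congr rfl fun r hr => ?_
        rw [slashExpansion_eq_sum_range_of_le K X u F (Nat.lt_succ_iff.1 (mem_range.1 hr)),
          slashExpansion_eq_sum_range_of_le L X u G (Nat.sub_le ν r),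
          mul_assoc _ (∑ s ∈ range (ν + 1), _), sum_mul_sum, mul_sum]
        refine sum_congr rfl fun s _ => ?_
        rw [mul_sum]
        exact sum_congr rfl fun t _ => by ring
    _ = ∑ s ∈ range (ν + 1), ∑ t ∈ range (ν + 1), (∑ r ∈ range (ν + 1),
          (-1) ^ (ν - r) * ν.choose r * (ascProd K r ν * ascProd L (ν - r) ν)
            * (slashCoeff K X r s * u ^ (r + s)) * (slashCoeff L X (ν - r) t * u ^ (ν - r + t)))
          * (F s * G t) := by
        simp only [sum_mul]
        rw [sum_comm]
        exact sum_congr rfl fun s _ => sum_comm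
    _ = u ^ (2 * ν) * bracketSum K L ν F G := by
        simp only [sum_bracketCoeff_mul_slashCoeff_mul_slashCoeff]
        rw [bracketSum, mul_sum]
        refine sum_congr rfl fun s hs => ?_
        have hsν := mem_range.1 hs
        have hcond : ∀ t, s + t = ν ↔ t = ν - s := by omega
        simp only [hcond, ite_mul, zero_mul, sum_ite_eq', mem_range,
          if_pos (by omega : ν - s < ν + 1)]
        ring

end CommRing

/-- The `X` of the expansion: `D (cz+d)⁻¹ = X (cz+d)⁻²`. -/
noncomputable def denomShift (γ : SL2Z) : ℂ := -(γ 1 0 : ℂ) / (2 * π * I)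

lemma hasDerivAt_slashTerm (γ : SL2Z) (K : ℂ) (m : ℕ) {F : ℂ → ℂ} {z : ℂ} (hz : z ∈ UpperHalf)
    (hF : DifferentiableAt ℂ F (moebius γ z)) :
    HasDerivAt (fun w => denom γ w ^ (-K) * ((denom γ w)⁻¹ ^ m * F (moebius γ w)))
      (2 * π * I * (denom γ z ^ (-K) * ((K + m) * denomShift γ * (denom γ z)⁻¹ ^ (m + 1)
        * F (moebius γ z) + (denom γ z)⁻¹ ^ (m + 2) * Dop F (moebius γ z)))) z := by
  have hj := denom_ne_zero γ hz
  have hF' : HasDerivAt (fun w => F (moebius γ w))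
      (deriv F (moebius γ z) * (denom γ z)⁻¹ ^ 2) z :=
    hF.hasDerivAt.comp z (hasDerivAt_moebius γ hz)
  refine ((hasDerivAt_denom_cpow γ (-K) hz).mul
    ((hasDerivAt_inv_denom_pow γ m hz).mul hF')).congr_deriv ?_
  simp only [Pi.mul_apply]
  rw [Complex.cpow_sub _ _ hj, Complex.cpow_one, Dop, denomShift]
  simp only [inv_pow]
  field_simp
  ring

lemma DIter_slash (k : ℝ) {f : ℂ → ℂ} (hf : DifferentiableOn ℂ f UpperHalf) (γ : SL2Z) (n : ℕ)
    {z : ℂ} (hz : z ∈ UpperHalf) :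
    DIter n (slash k γ f) z = denom γ z ^ (-(k : ℂ)) *
      slashExpansion (k : ℂ) (denomShift γ) (denom γ z)⁻¹ (fun s => DIter s f (moebius γ z)) n := by
  induction n generalizing z with
  | zero => simp [DIter, slash, slashExpansion, slashCoeff]
  | succ n ih =>
    have hlocal : DIter n (slash k γ f) =ᶠ[nhds z] fun w => ∑ s ∈ range (n + 1),
        slashCoeff (k : ℂ) (denomShift γ) n s *
          (denom γ w ^ (-(k : ℂ)) * ((denom γ w)⁻¹ ^ (n + s) * DIter s f (moebius γ w))) := by
      filter_upwards [isOpen_upperHalf.mem_nhds hz] with w hw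
      rw [ih hw, slashExpansion, mul_sum]
      exact sum_congr rfl fun s _ => by ring
    have hderiv := HasDerivAt.fun_sum (u := range (n + 1)) fun s _ =>
      (hasDerivAt_slashTerm γ (k : ℂ) (n + s) hz
        ((analyticOnNhd_DIter hf s _ (moebius_mem_upperHalf γ hz)).differentiableAt)).const_mul
        (slashCoeff (k : ℂ) (denomShift γ) n s)
    rw [DIter_succ, Dop, hlocal.deriv_eq, hderiv.deriv, ← slashExpansion_succ, mul_sum, mul_sum]
    refine sum_congr rfl fun s _ => ?_
    rw [← DIter_succ]
    field_simp

lemma RC_eq_bracketSum {k l : ℝ} {ν : ℕ} (hk : Real.Gamma (k + ν) ≠ 0)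
    (hl : Real.Gamma (l + ν) ≠ 0) (f g : ℂ → ℂ) (z : ℂ) :
    RC k l ν f g z = bracketSum (k : ℂ) (l : ℂ) ν (fun r => DIter r f z) (fun r => DIter r g z) :=
  sum_congr rfl fun r hr => by
    rw [Gamma_coeff_eq_ascProd k l (Nat.lt_succ_iff.1 (mem_range.1 hr)) hk hl]

lemma cpow_neg_weight_add {w : ℂ} (hw : w ≠ 0) (k l : ℝ) (ν : ℕ) :
    w ^ (-((k + l + 2 * ν : ℝ) : ℂ)) = w ^ (-(k : ℂ)) * w ^ (-(l : ℂ)) * w⁻¹ ^ (2 * ν) := by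
  rw [show -((k + l + 2 * ν : ℝ) : ℂ) = -(k : ℂ) + -(l : ℂ) + -((2 * ν : ℕ) : ℂ) by push_cast; ring,
    Complex.cpow_add _ _ hw, Complex.cpow_add _ _ hw, Complex.cpow_neg _ ((2 * ν : ℕ) : ℂ),
    Complex.cpow_natCast, inv_pow]

end RankinCohen

open RankinCohen in
/-- cocycle property of the Rankin–Cohen bracket under the slash action. -/
theorem rankinCohen_cocycle (k l : ℝ) (ν : ℕ) (f g : ℂ → ℂ)
    (hf : DifferentiableOn ℂ f UpperHalf) (hg : DifferentiableOn ℂ g UpperHalf)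
    (γ : SL2Z) :
    ∀ z ∈ UpperHalf,
      RC k l ν (slash k γ f) (slash l γ g) z
        = slash (k + l + 2 * ν) γ (RC k l ν f g) z := by
  intro z hz
  by_cases hk : Real.Gamma (k + ν) = 0
  · simp [RC, slash, hk]
  by_cases hl : Real.Gamma (l + ν) = 0
  · simp [RC, slash, hl]
  have hexpand : ∀ (m : ℝ) {h : ℂ → ℂ}, DifferentiableOn ℂ h UpperHalf →
      (fun r => DIter r (slash m γ h) z) = fun r => denom γ z ^ (-(m : ℂ)) *
        slashExpansion (m : ℂ) (denomShift γ) (denom γ z)⁻¹ (fun s => DIter s h (moebius γ z)) r :=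
    fun m _ hh => funext fun r => DIter_slash m hh γ r hz
  rw [RC_eq_bracketSum hk hl, hexpand k hf, hexpand l hg, bracketSum_const_mul,
    bracketSum_slashExpansion, slash, RC_eq_bracketSum hk hl,
    cpow_neg_weight_add (denom_ne_zero γ hz)]
  ring
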